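/- arXiv:0707.1551 — 4 statements merged into one kernel-verified Lean document; each statement's English description precedes it below -/
import Mathlib

section
/- For every finite vertex set V, every digraph G=(V,A), every sign vector σ ∈ {−1,1}^A, every a ∈ [0,1), and every τ ∈ ℕ with τ ≥ 1, the set {(T,x) ∈ O_{G,σ,a} : P(F_{G,σ,T,a}, x) = τ} is open in [0,1]^A × [0,1]^V; in particular, the asymptotic period is locally constant on O_{G,σ,a}. -/
open MeasureTheory Filter Topology
open scoped ENNReal

/-- The Heaviside function: `H(s) = 1` if `s ≥ 0`, and `0` otherwise. -/
noncomputable def heaviside (s : ℝ) : ℝ := if 0 ≤ s then 1 else 0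

/-- Signs `{-1,1}` encoded by booleans: `true ↦ +1`, `false ↦ -1`. -/
def signVal (b : Bool) : ℝ := if b then 1 else -1

variable {V : Type*} [Fintype V] [DecidableEq V]

/-- In-degree of a vertex `v` in the arrow set `A`: `Id(v) = #{u : (u,v) ∈ A}`. -/
def inDeg {V : Type*} [DecidableEq V] (A : Finset (V × V)) (v : V) : ℕ :=
  (A.filter fun e => e.2 = v).card

/-- The regulatory map `F_{G,σ,T,a}(x)_v = a x_v + (1-a) (1/Id(v)) Σ_{(u,v)∈A} H(σ_{(u,v)}(x_u - T_{(u,v)}))`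
(the interaction term being `0` when `Id(v) = 0`, by the convention `(0 : ℝ)⁻¹ = 0`). -/
noncomputable def regMap {V : Type*} [Fintype V] [DecidableEq V] (A : Finset (V × V))
    (σ : {e // e ∈ A} → Bool) (T : {e // e ∈ A} → ℝ) (a : ℝ) (x : V → ℝ) : V → ℝ := fun v =>
  a * x v + (1 - a) * ((inDeg A v : ℝ)⁻¹ *
    ∑ e ∈ A.attach.filter (fun e => e.val.2 = v),
      heaviside (signVal (σ e) * (x e.val.1 - T e)))

/-- The cube `[0,1]^V`. -/
def cubeV (V : Type*) [Fintype V] : Set (V → ℝ) := Set.pi Set.univ fun _ => Set.Icc (0:ℝ) 1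

/-- The cube `[0,1]^A`. -/
def cubeA {V : Type*} [Fintype V] [DecidableEq V] (A : Finset (V × V)) :
    Set ({e // e ∈ A} → ℝ) := Set.pi Set.univ fun _ => Set.Icc (0:ℝ) 1

/-- The discontinuity set `Δ_T = {x ∈ [0,1]^V : x_u = T_{(u,v)} for some (u,v) ∈ A}`. -/
def discSet {V : Type*} [Fintype V] [DecidableEq V] (A : Finset (V × V))
    (T : {e // e ∈ A} → ℝ) : Set (V → ℝ) :=
  {x | x ∈ cubeV V ∧ ∃ e : {e // e ∈ A}, x e.val.1 = T e}

/-- `inf_{t ≥ 0} d_max(F^t(x), Δ_T)` as an extended nonnegative real (the metric on `V → ℝ`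
is the sup metric `d_max`, and the distance to the empty set is `∞`). -/
noncomputable def orbitGap {V : Type*} [Fintype V] [DecidableEq V] (A : Finset (V × V))
    (σ : {e // e ∈ A} → Bool) (T : {e // e ∈ A} → ℝ) (a : ℝ) (x : V → ℝ) : ℝ≥0∞ :=
  ⨅ t : ℕ, EMetric.infEdist ((regMap A σ T a)^[t] x) (discSet A T)

/-- `asympPeriod A σ T a x τ` says that the asymptotic period `P(F_{G,σ,T,a}, x)` equals `τ`:
there is a periodic point `y ∈ [0,1]^V` of minimal period `τ ≥ 1` whose orbit attracts that
of `x` (distances are the sup metric `d_max`). -/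
def asympPeriod {V : Type*} [Fintype V] [DecidableEq V] (A : Finset (V × V))
    (σ : {e // e ∈ A} → Bool) (T : {e // e ∈ A} → ℝ) (a : ℝ) (x : V → ℝ) (τ : ℕ) : Prop :=
  1 ≤ τ ∧ ∃ y ∈ cubeV V, (regMap A σ T a)^[τ] y = y ∧
    (∀ t, 0 < t → t < τ → (regMap A σ T a)^[t] y ≠ y) ∧
    Filter.Tendsto (fun t => dist ((regMap A σ T a)^[t] x) ((regMap A σ T a)^[t] y))
      Filter.atTop (nhds 0)

section Helpers

lemma heaviside_nonneg (s : ℝ) : 0 ≤ heaviside s := by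
  unfold heaviside; split <;> norm_num

lemma heaviside_le_one (s : ℝ) : heaviside s ≤ 1 := by
  unfold heaviside; split <;> norm_num

lemma heaviside_signVal_eq (b : Bool) (p q δ : ℝ) (hq : δ ≤ |q|) (hpq : |p - q| < δ) :
    heaviside (signVal b * p) = heaviside (signVal b * q) := by
  have habs := abs_lt.mp hpq
  rcases le_or_gt 0 q with h | h
  · have hq' : δ ≤ q := by rwa [abs_of_nonneg h] at hq
    have hp : 0 < p := by linarith
    have hq2 : 0 < q := by linarith
    cases b <;>
      simp [heaviside, signVal, hp.le, hq2.le, not_le.mpr hp, not_le.mpr hq2]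
  · have hq' : δ ≤ -q := by rwa [abs_of_neg h] at hq
    have hp : p < 0 := by linarith
    cases b <;>
      simp [heaviside, signVal, not_le.mpr hp, not_le.mpr h, hp.le, h.le]

lemma card_attach_filter {V : Type*} [DecidableEq V] (A : Finset (V × V)) (v : V) :
    (A.attach.filter fun e => e.val.2 = v).card = inDeg A v := by
  unfold inDeg
  apply Finset.card_bij (fun e _ => e.val)
  · intro e he
    simp only [Finset.mem_filter, Finset.mem_attach, true_and] at he
    exact Finset.mem_filter.mpr ⟨e.prop, he⟩
  · intro e1 h1 e2 h2 h; exact Subtype.ext h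
  · intro b hb
    simp only [Finset.mem_filter] at hb
    exact ⟨⟨b, hb.1⟩, by simp [hb.2], rfl⟩

lemma mem_cubeV_iff {V : Type*} [Fintype V] {x : V → ℝ} :
    x ∈ cubeV V ↔ ∀ v, x v ∈ Set.Icc (0:ℝ) 1 := by
  simp [cubeV, Set.mem_pi, Pi.le_def, Set.Icc, forall_and]

lemma regMap_mem_cubeV {V : Type*} [Fintype V] [DecidableEq V] (A : Finset (V × V))
    (σ : {e // e ∈ A} → Bool) (T : {e // e ∈ A} → ℝ) (a : ℝ)
    (ha0 : 0 ≤ a) (ha1 : a ≤ 1) {x : V → ℝ} (hx : x ∈ cubeV V) :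
    regMap A σ T a x ∈ cubeV V := by
  rw [mem_cubeV_iff] at hx ⊢
  intro v
  have hxv := hx v
  rw [Set.mem_Icc] at hxv
  have hS0 : 0 ≤ ∑ e ∈ A.attach.filter (fun e => e.val.2 = v),
      heaviside (signVal (σ e) * (x e.val.1 - T e)) :=
    Finset.sum_nonneg fun e _ => heaviside_nonneg _
  have hS1 : ∑ e ∈ A.attach.filter (fun e => e.val.2 = v),
      heaviside (signVal (σ e) * (x e.val.1 - T e)) ≤ (inDeg A v : ℝ) := by
    calc ∑ e ∈ A.attach.filter (fun e => e.val.2 = v),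
        heaviside (signVal (σ e) * (x e.val.1 - T e))
        ≤ ∑ _e ∈ A.attach.filter (fun e => e.val.2 = v), (1:ℝ) :=
          Finset.sum_le_sum fun e _ => heaviside_le_one _
      _ = ((A.attach.filter fun e => e.val.2 = v).card : ℝ) := by simp
      _ = (inDeg A v : ℝ) := by rw [card_attach_filter]
  have hI0 : 0 ≤ (inDeg A v : ℝ)⁻¹ * ∑ e ∈ A.attach.filter (fun e => e.val.2 = v),
      heaviside (signVal (σ e) * (x e.val.1 - T e)) := by positivity
  have hI1 : (inDeg A v : ℝ)⁻¹ * (∑ e ∈ A.attach.filter (fun e => e.val.2 = v),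
      heaviside (signVal (σ e) * (x e.val.1 - T e))) ≤ 1 := by
    rcases Nat.eq_zero_or_pos (inDeg A v) with h | h
    · simp [h]
    · have hd : (0:ℝ) < (inDeg A v : ℝ) := by exact_mod_cast h
      calc (inDeg A v : ℝ)⁻¹ * _ ≤ (inDeg A v : ℝ)⁻¹ * (inDeg A v : ℝ) :=
            mul_le_mul_of_nonneg_left hS1 (inv_nonneg.mpr hd.le)
        _ = 1 := inv_mul_cancel₀ hd.ne'
  simp only [regMap, Set.mem_Icc]
  constructor
  · nlinarith
  · nlinarith

lemma iterate_mem_cubeV {V : Type*} [Fintype V] [DecidableEq V] (A : Finset (V × V))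
    (σ : {e // e ∈ A} → Bool) (T : {e // e ∈ A} → ℝ) (a : ℝ)
    (ha0 : 0 ≤ a) (ha1 : a ≤ 1) {x : V → ℝ} (hx : x ∈ cubeV V) (t : ℕ) :
    (regMap A σ T a)^[t] x ∈ cubeV V := by
  induction t with
  | zero => exact hx
  | succ t ih =>
    rw [Function.iterate_succ_apply']
    exact regMap_mem_cubeV A σ T a ha0 ha1 ih

lemma shadow {V : Type*} [Fintype V] [DecidableEq V] (A : Finset (V × V))
    (σ : {e // e ∈ A} → Bool) (T T₀ : {e // e ∈ A} → ℝ) (a : ℝ)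
    (ha0 : 0 ≤ a) (ha1 : a ≤ 1) (x x₀ : V → ℝ) (δ ε m : ℝ)
    (hm0 : 0 ≤ m) (hmε : m ≤ ε)
    (hδ : ∀ t (e : {e // e ∈ A}), δ ≤ |((regMap A σ T₀ a)^[t] x₀) e.val.1 - T₀ e|)
    (hT : ∀ e, |T e - T₀ e| ≤ ε) (hx : ∀ v, |x v - x₀ v| ≤ m)
    (h2 : ε + ε < δ) :
    ∀ t v, |((regMap A σ T a)^[t] x) v - ((regMap A σ T₀ a)^[t] x₀) v| ≤ a ^ t * m := by
  intro t
  induction t with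
  | zero => intro v; simpa using hx v
  | succ t ih =>
    intro v
    rw [Function.iterate_succ_apply', Function.iterate_succ_apply']
    have hat : a ^ t ≤ 1 := pow_le_one₀ ha0 ha1
    have hatm : a ^ t * m ≤ m := by nlinarith
    have hsum : ∑ e ∈ A.attach.filter (fun e => e.val.2 = v),
        heaviside (signVal (σ e) * (((regMap A σ T a)^[t] x) e.val.1 - T e))
        = ∑ e ∈ A.attach.filter (fun e => e.val.2 = v),
        heaviside (signVal (σ e) * (((regMap A σ T₀ a)^[t] x₀) e.val.1 - T₀ e)) := by
      refine Finset.sum_congr rfl fun e _ => ?_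
      refine heaviside_signVal_eq _ _ _ δ (hδ t e) ?_
      have h1 := ih e.val.1
      have h2' := hT e
      calc |(((regMap A σ T a)^[t] x) e.val.1 - T e)
              - (((regMap A σ T₀ a)^[t] x₀) e.val.1 - T₀ e)|
          = |(((regMap A σ T a)^[t] x) e.val.1 - ((regMap A σ T₀ a)^[t] x₀) e.val.1)
              + (T₀ e - T e)| := by ring_nf
        _ ≤ |((regMap A σ T a)^[t] x) e.val.1 - ((regMap A σ T₀ a)^[t] x₀) e.val.1|
              + |T₀ e - T e| := abs_add_le _ _
        _ < δ := by rw [abs_sub_comm (T₀ e)]; linarith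
    have hrec : regMap A σ T a ((regMap A σ T a)^[t] x) v
        - regMap A σ T₀ a ((regMap A σ T₀ a)^[t] x₀) v
        = a * (((regMap A σ T a)^[t] x) v - ((regMap A σ T₀ a)^[t] x₀) v) := by
      simp only [regMap]
      rw [hsum]; ring
    rw [hrec, abs_mul, abs_of_nonneg ha0]
    calc a * |((regMap A σ T a)^[t] x) v - ((regMap A σ T₀ a)^[t] x₀) v|
        ≤ a * (a ^ t * m) := mul_le_mul_of_nonneg_left (ih v) ha0
      _ = a ^ (t+1) * m := by ring

end Helpers
/-- For every finite vertex set `V`, digraph `G=(V,A)`, sign vector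
`σ ∈ {-1,1}^A`, `a ∈ [0,1)` and `τ ≥ 1`, the set of pairs `(T,x)` lying in
`O_{G,σ,a} = {(T,x) : inf_{t≥0} d_max(F_{G,σ,T,a}^t(x), Δ_T) > 0}` whose asymptotic period
equals `τ` is open in `[0,1]^A × [0,1]^V` (with its subspace topology); in particular the
asymptotic period is locally constant on `O_{G,σ,a}`. -/
theorem asympPeriod_isOpen_on_orbitGap_pos (V : Type*) [Fintype V] [DecidableEq V]
    (A : Finset (V × V)) (σ : {e // e ∈ A} → Bool) (a : ℝ) (ha0 : 0 ≤ a) (ha1 : a < 1)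
    (τ : ℕ) (hτ : 1 ≤ τ) :
    IsOpen {p : ↥(cubeA A ×ˢ cubeV V) |
      0 < orbitGap A σ p.val.1 a p.val.2 ∧ asympPeriod A σ p.val.1 a p.val.2 τ} := by
  rw [Metric.isOpen_iff]
  rintro p ⟨hg, hper⟩
  obtain ⟨hT₀cube, hx₀cube⟩ := Set.mem_prod.mp p.prop
  set T₀ := p.val.1 with hT₀def
  set x₀ := p.val.2 with hx₀def
  set F₀ := regMap A σ T₀ a with hF₀def
  -- a positive real lower bound for the orbit gap
  set δ' : ℝ≥0∞ := min (orbitGap A σ T₀ a x₀) 1 with hδ'def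
  have hδ'0 : 0 < δ' := lt_min hg one_pos
  have hδ'top : δ' ≠ ⊤ := ne_top_of_le_ne_top ENNReal.one_ne_top (min_le_right _ _)
  set δ : ℝ := δ'.toReal with hδdef
  have hδpos : 0 < δ := ENNReal.toReal_pos hδ'0.ne' hδ'top
  have hgap_t : ∀ t, δ' ≤ EMetric.infEdist (F₀^[t] x₀) (discSet A T₀) := by
    intro t
    exact (min_le_left _ _).trans (iInf_le _ t)
  have horbit_cube : ∀ t, F₀^[t] x₀ ∈ cubeV V :=
    iterate_mem_cubeV A σ T₀ a ha0 ha1.le hx₀cube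
  -- the orbit of x₀ stays at distance ≥ δ from every threshold
  have hδorbit : ∀ t (e : {e // e ∈ A}), δ ≤ |(F₀^[t] x₀) e.val.1 - T₀ e| := by
    intro t e
    set q := F₀^[t] x₀ with hq
    set z := Function.update q e.val.1 (T₀ e) with hzdef
    have hTe : T₀ e ∈ Set.Icc (0:ℝ) 1 := hT₀cube e (Set.mem_univ e)
    have hzc : z ∈ cubeV V := by
      rw [mem_cubeV_iff]
      intro w
      by_cases hw : w = e.val.1
      · subst hw; simpa [z, Function.update_self] using hTe
      · rw [hzdef, Function.update_of_ne hw]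
        exact (mem_cubeV_iff.mp (horbit_cube t)) w
    have hzΔ : z ∈ discSet A T₀ := ⟨hzc, e, by simp [z, Function.update_self]⟩
    have h2 : dist q z ≤ |q e.val.1 - T₀ e| := by
      rw [dist_pi_le_iff (abs_nonneg _)]
      intro w
      by_cases hw : w = e.val.1
      · subst hw
        simp [z, Function.update_self, Real.dist_eq]
      · simp [z, Function.update_of_ne hw]
    have h3 : δ' ≤ ENNReal.ofReal |q e.val.1 - T₀ e| := by
      calc δ' ≤ EMetric.infEdist q (discSet A T₀) := hgap_t t
        _ ≤ edist q z := EMetric.infEdist_le_edist_of_mem hzΔ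
        _ = ENNReal.ofReal (dist q z) := edist_dist _ _
        _ ≤ ENNReal.ofReal |q e.val.1 - T₀ e| := ENNReal.ofReal_le_ofReal h2
    have h4 := ENNReal.toReal_mono ENNReal.ofReal_ne_top h3
    rwa [ENNReal.toReal_ofReal (abs_nonneg _)] at h4
  set ε : ℝ := δ / 4 with hεdef
  have hεpos : 0 < ε := by positivity
  refine ⟨ε, hεpos, ?_⟩
  rintro ⟨⟨T, x⟩, hqmem⟩ hball
  rw [Metric.mem_ball, Subtype.dist_eq, Prod.dist_eq] at hball
  have hdT : dist T T₀ < ε := lt_of_le_of_lt (le_max_left _ _) hball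
  have hdx : dist x x₀ < ε := lt_of_le_of_lt (le_max_right _ _) hball
  have hT : ∀ e, |T e - T₀ e| ≤ ε := fun e => by
    have := dist_le_pi_dist T T₀ e
    rw [Real.dist_eq] at this
    linarith
  have hx : ∀ v, |x v - x₀ v| ≤ ε := fun v => by
    have := dist_le_pi_dist x x₀ v
    rw [Real.dist_eq] at this
    linarith
  have h2ε : ε + ε < δ := by rw [hεdef]; linarith
  -- shadowing bound for the perturbed orbit
  have hshadow := shadow A σ T T₀ a ha0 ha1.le x x₀ δ ε ε hεpos.le le_rfl hδorbit hT hx h2ε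
  have hat1 : ∀ t : ℕ, a ^ t ≤ 1 := fun t => pow_le_one₀ ha0 ha1.le
  constructor
  · -- positive orbit gap for the perturbed pair
    show 0 < orbitGap A σ T a x
    have key : ENNReal.ofReal (δ / 2) ≤ orbitGap A σ T a x := by
      refine le_iInf fun t => EMetric.le_infEdist.mpr fun z hz => ?_
      obtain ⟨hzc, e, hze⟩ := hz
      have h1 : δ / 2 ≤ |((regMap A σ T a)^[t] x) e.val.1 - z e.val.1| := by
        rw [hze]
        have hs := hshadow t e.val.1
        have hδo := hδorbit t e
        have hTe := hT e
        have hatm : a ^ t * ε ≤ ε := by nlinarith [hat1 t]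
        have htri : |(F₀^[t] x₀) e.val.1 - T₀ e| - |((regMap A σ T a)^[t] x) e.val.1 - T e|
            ≤ |((F₀^[t] x₀) e.val.1 - T₀ e) - (((regMap A σ T a)^[t] x) e.val.1 - T e)| :=
          abs_sub_abs_le_abs_sub _ _
        have htri2 : |((F₀^[t] x₀) e.val.1 - T₀ e) - (((regMap A σ T a)^[t] x) e.val.1 - T e)|
            ≤ |((regMap A σ T a)^[t] x) e.val.1 - (F₀^[t] x₀) e.val.1| + |T e - T₀ e| := by
          calc |((F₀^[t] x₀) e.val.1 - T₀ e) - (((regMap A σ T a)^[t] x) e.val.1 - T e)|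
              = |((F₀^[t] x₀) e.val.1 - ((regMap A σ T a)^[t] x) e.val.1) + (T e - T₀ e)| := by
                ring_nf
            _ ≤ |(F₀^[t] x₀) e.val.1 - ((regMap A σ T a)^[t] x) e.val.1| + |T e - T₀ e| :=
                abs_add_le _ _
            _ = |((regMap A σ T a)^[t] x) e.val.1 - (F₀^[t] x₀) e.val.1| + |T e - T₀ e| := by
                rw [abs_sub_comm]
        rw [hεdef] at *
        linarith
      calc ENNReal.ofReal (δ / 2)
          ≤ ENNReal.ofReal (dist ((regMap A σ T a)^[t] x) z) := by
            apply ENNReal.ofReal_le_ofReal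
            calc δ / 2 ≤ |((regMap A σ T a)^[t] x) e.val.1 - z e.val.1| := h1
              _ = dist (((regMap A σ T a)^[t] x) e.val.1) (z e.val.1) := (Real.dist_eq _ _).symm
              _ ≤ dist ((regMap A σ T a)^[t] x) z := dist_le_pi_dist _ _ _
        _ = edist ((regMap A σ T a)^[t] x) z := (edist_dist _ _).symm
    exact lt_of_lt_of_le (ENNReal.ofReal_pos.mpr (by linarith)) key
  · -- asymptotic period τ for the perturbed pair
    obtain ⟨-, y, hycube, hyper, hymin, hylim⟩ := hper
    have hτpos : 0 < τ := hτ
    -- the periodic orbit also stays at distance ≥ δ from the thresholds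
    have hδy : ∀ j (e : {e // e ∈ A}), δ ≤ |(F₀^[j] y) e.val.1 - T₀ e| := by
      intro j e
      have hmono : Filter.Tendsto (fun k : ℕ => j + τ * k) atTop atTop := by
        apply Filter.tendsto_atTop_atTop.mpr
        intro b
        exact ⟨b, fun k hk => le_trans hk (le_trans (Nat.le_mul_of_pos_left k hτpos)
          (Nat.le_add_left _ _))⟩
      have hyfix : ∀ k : ℕ, F₀^[j + τ * k] y = F₀^[j] y := by
        intro k
        rw [Function.iterate_add_apply, Function.iterate_mul, Function.iterate_fixed hyper]
      have h1 : Filter.Tendsto (fun k : ℕ => dist (F₀^[j + τ * k] x₀) (F₀^[j + τ * k] y))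
          atTop (nhds 0) := hylim.comp hmono
      simp only [hyfix] at h1
      have h2 : Filter.Tendsto
          (fun k : ℕ => dist ((F₀^[j + τ * k] x₀) e.val.1) ((F₀^[j] y) e.val.1))
          atTop (nhds 0) := by
        refine squeeze_zero (fun k => dist_nonneg) (fun k => ?_) h1
        exact dist_le_pi_dist _ _ _
      have h3 : Filter.Tendsto (fun k : ℕ => (F₀^[j + τ * k] x₀) e.val.1) atTop
          (nhds ((F₀^[j] y) e.val.1)) := tendsto_iff_dist_tendsto_zero.mpr h2
      have h4 : Filter.Tendsto (fun k : ℕ => |(F₀^[j + τ * k] x₀) e.val.1 - T₀ e|) atTop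
          (nhds |(F₀^[j] y) e.val.1 - T₀ e|) := (h3.sub_const _).abs
      exact ge_of_tendsto' h4 fun k => hδorbit _ e
    -- the perturbed map agrees with F₀ along the periodic orbit
    have hagree : ∀ j, (regMap A σ T a)^[j] y = F₀^[j] y := by
      intro j
      funext v
      have := shadow A σ T T₀ a ha0 ha1.le y y δ ε 0 le_rfl hεpos.le hδy hT
        (fun v => by simp) h2ε j v
      have h0 : |((regMap A σ T a)^[j] y) v - (F₀^[j] y) v| ≤ 0 := by simpa using this
      have := abs_nonpos_iff.mp (le_antisymm h0 (abs_nonneg _)).le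
      linarith [sub_eq_zero.mp this]
    refine ⟨hτ, y, hycube, by rw [hagree τ]; exact hyper,
      fun t ht1 ht2 => by rw [hagree t]; exact hymin t ht1 ht2, ?_⟩
    have hb : ∀ t : ℕ, dist ((regMap A σ T a)^[t] x) ((regMap A σ T a)^[t] y)
        ≤ a ^ t * ε + dist (F₀^[t] x₀) (F₀^[t] y) := by
      intro t
      rw [hagree t]
      calc dist ((regMap A σ T a)^[t] x) (F₀^[t] y)
          ≤ dist ((regMap A σ T a)^[t] x) (F₀^[t] x₀) + dist (F₀^[t] x₀) (F₀^[t] y) :=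
            dist_triangle _ _ _
        _ ≤ a ^ t * ε + dist (F₀^[t] x₀) (F₀^[t] y) := by
            have hd : dist ((regMap A σ T a)^[t] x) (F₀^[t] x₀) ≤ a ^ t * ε := by
              rw [dist_pi_le_iff (by positivity)]
              intro v
              rw [Real.dist_eq]
              exact hshadow t v
            linarith
    refine squeeze_zero (fun t => dist_nonneg) hb ?_
    have hpow : Filter.Tendsto (fun t : ℕ => a ^ t * ε) atTop (nhds 0) := by
      simpa using (tendsto_pow_atTop_nhds_zero_of_lt_one ha0 ha1).mul_const ε
    simpa using hpow.add hylim
end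

section
/- Let V be a finite vertex set, G=(V,A) a digraph, σ ∈ {−1,1}^A, a ∈ [0,1), and (T,x) ∈ [0,1]^A × [0,1]^V with ε := inf_{t≥0} d_max(F_{G,σ,T,a}^t(x), Δ_T) > 0. Then there exist τ ∈ ℕ with τ ≥ 1 and y ∈ [0,1]^V such that F_{G,σ,T,a}^τ(y) = y, d_max(F_{G,σ,T,a}^t(y), Δ_T) ≥ ε for every t ≥ 0, and lim_{t→∞} d_max(F_{G,σ,T,a}^t(x), F_{G,σ,T,a}^t(y)) = 0. In particular the asymptotic period P(F_{G,σ,T,a}, x) is finite. -/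
open MeasureTheory Filter Topology
open scoped ENNReal

variable {V : Type*} [Fintype V] [DecidableEq V]

/-!
The orbit of `x` keeps distance at least `ε` from `Δ_T`, so every point within `ε` of `F^t(x)`
sees the same Heaviside values as `F^t(x)` and `F` contracts its distance to the orbit by the
factor `a`. The orbit lives in the compact cube, hence returns within `ε` of itself after
some `τ ≥ 1` steps; the contraction then makes the returns `F^(s + kτ)(x)` a geometric Cauchy
sequence whose limit is `τ`-periodic and attracts the orbit. Its orbit is made of limits of orbit
points of `x`, so it stays in the cube and at distance at least `ε` from `Δ_T`.
-/

open Function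

section OrbitContraction

variable {X : Type*} [MetricSpace X] {F : X → X} {x : X} {a r : ℝ}

def ContractsNearOrbit (F : X → X) (x : X) (a r : ℝ) : Prop :=
  ∀ (t : ℕ) (w : X), dist w (F^[t] x) < r → dist (F w) (F^[t + 1] x) ≤ a * dist w (F^[t] x)

theorem ContractsNearOrbit.dist_iterate_le (h : ContractsNearOrbit F x a r) (ha0 : 0 ≤ a)
    (ha1 : a ≤ 1) {n : ℕ} {w : X} (hw : dist w (F^[n] x) < r) (m : ℕ) :
    dist (F^[m] w) (F^[n + m] x) ≤ a ^ m * dist w (F^[n] x) := by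
  induction m with
  | zero => simp
  | succ m ih =>
    have hclose : dist (F^[m] w) (F^[n + m] x) < r :=
      ih.trans_lt ((mul_le_of_le_one_left dist_nonneg (pow_le_one₀ ha0 ha1)).trans_lt hw)
    calc dist (F^[m + 1] w) (F^[n + (m + 1)] x)
        = dist (F (F^[m] w)) (F^[n + m + 1] x) := by rw [iterate_succ_apply', add_assoc]
      _ ≤ a * dist (F^[m] w) (F^[n + m] x) := h _ _ hclose
      _ ≤ a * (a ^ m * dist w (F^[n] x)) := by gcongr
      _ = a ^ (m + 1) * dist w (F^[n] x) := by ring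

theorem ContractsNearOrbit.exists_isPeriodicPt [CompleteSpace X] (h : ContractsNearOrbit F x a r)
    (ha0 : 0 ≤ a) (ha1 : a < 1) {s τ : ℕ} (hτ : 0 < τ)
    (hret : dist (F^[s + τ] x) (F^[s] x) < r) :
    ∃ y s', IsPeriodicPt F τ y ∧
      Tendsto (fun m => dist (F^[s' + m] x) (F^[m] y)) atTop (𝓝 0) := by
  set u : ℕ → X := fun k => F^[s + τ * k] x
  have hu_succ : ∀ k, u (k + 1) = F^[τ * k] (F^[s + τ] x) := fun k => by
    simp only [u, ← iterate_add_apply]; ring_nf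
  have hstep : ∀ k, dist (u k) (u (k + 1)) ≤ dist (F^[s + τ] x) (F^[s] x) * (a ^ τ) ^ k := by
    intro k
    rw [dist_comm, hu_succ, ← pow_mul, mul_comm (dist _ _)]
    exact h.dist_iterate_le ha0 ha1.le hret _
  obtain ⟨y, hu_lim⟩ := cauchySeq_tendsto_of_complete
    (cauchySeq_of_le_geometric _ _ (pow_lt_one₀ ha0 ha1 hτ.ne') hstep)
  have hdist : Tendsto (fun k => dist y (u k)) atTop (𝓝 0) := by
    simpa only [dist_comm] using tendsto_iff_dist_tendsto_zero.1 hu_lim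
  obtain ⟨k₀, hk₀⟩ :=
    eventually_atTop.1 (hdist.eventually (gt_mem_nhds (dist_nonneg.trans_lt hret)))
  have htrack : ∀ k ≥ k₀, ∀ m, dist (F^[m] y) (F^[s + τ * k + m] x) ≤ a ^ m * dist y (u k) :=
    fun k hk => h.dist_iterate_le ha0 ha1.le (hk₀ k hk)
  have hperiodic : IsPeriodicPt F τ y := by
    refine tendsto_nhds_unique (f := fun k => u (k + 1)) ?_
      (hu_lim.comp (tendsto_add_atTop_nat 1))
    refine tendsto_iff_dist_tendsto_zero.2
      (squeeze_zero' (.of_forall fun _ => dist_nonneg) ?_ hdist)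
    filter_upwards [eventually_ge_atTop k₀] with k hk
    rw [dist_comm, show u (k + 1) = F^[s + τ * k + τ] x by simp only [u]; ring_nf]
    exact (htrack k hk τ).trans (mul_le_of_le_one_left dist_nonneg (pow_le_one₀ ha0 ha1.le))
  refine ⟨y, s + τ * k₀, hperiodic, squeeze_zero (fun _ => dist_nonneg) (fun m => ?_)
    (by simpa using (tendsto_pow_atTop_nhds_zero_of_lt_one ha0 ha1).mul_const (dist y (u k₀)))⟩
  rw [dist_comm]
  exact htrack k₀ le_rfl m

/-- Shifting a periodic point along its own orbit absorbs a time lag `s` of the attraction. -/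
theorem Function.IsPeriodicPt.exists_tendsto_dist_iterate {y : X} {s τ : ℕ}
    (hy : IsPeriodicPt F τ y) (hτ : 0 < τ)
    (h : Tendsto (fun m => dist (F^[s + m] x) (F^[m] y)) atTop (𝓝 0)) :
    ∃ y', IsPeriodicPt F τ y' ∧ Tendsto (fun t => dist (F^[t] x) (F^[t] y')) atTop (𝓝 0) := by
  refine ⟨F^[s * τ - s] y, hy.apply_iterate _, (h.comp (tendsto_sub_atTop_nat s)).congr' ?_⟩
  filter_upwards [eventually_ge_atTop s] with t ht
  have hsτ : s ≤ s * τ := Nat.le_mul_of_pos_right s hτ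
  have hlag : t + (s * τ - s) = (t - s) + s * τ := by omega
  simp only [comp_apply, ← iterate_add_apply, hlag, Nat.add_sub_cancel' ht]
  rw [iterate_add_apply, (hy.const_mul s).eq]

theorem Function.IsPeriodicPt.iterate_mem_of_tendsto_dist {y : X} {τ : ℕ}
    (hy : IsPeriodicPt F τ y) (hτ : 0 < τ)
    (hxy : Tendsto (fun t => dist (F^[t] x) (F^[t] y)) atTop (𝓝 0)) {C : Set X}
    (hC : IsClosed C) (hxC : ∀ t, F^[t] x ∈ C) (t : ℕ) : F^[t] y ∈ C := by
  have hk : Tendsto (fun k => t + τ * k) atTop atTop :=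
    tendsto_atTop_mono (fun k => le_add_left (Nat.le_mul_of_pos_left k hτ)) tendsto_id
  refine hC.mem_of_tendsto (tendsto_iff_dist_tendsto_zero.2 ((hxy.comp hk).congr fun k => ?_))
    (.of_forall fun k => hxC (t + τ * k))
  rw [comp_apply, iterate_add_apply F t (τ * k) y, (hy.mul_const k).eq]

theorem IsCompact.exists_dist_add_lt {K : Set X} (hK : IsCompact K) {u : ℕ → X}
    (hu : ∀ n, u n ∈ K) (hr : 0 < r) : ∃ s τ, 0 < τ ∧ dist (u (s + τ)) (u s) < r := by
  obtain ⟨p, -, φ, hφ, hconv⟩ := hK.tendsto_subseq hu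
  obtain ⟨N, hN⟩ := Metric.cauchySeq_iff'.1 hconv.cauchySeq r hr
  have hlt : φ N < φ (N + 1) := hφ N.lt_succ_self
  refine ⟨φ N, φ (N + 1) - φ N, by omega, ?_⟩
  rw [Nat.add_sub_cancel' hlt.le]
  exact hN (N + 1) N.le_succ

end OrbitContraction

theorem heaviside_mem_Icc (s : ℝ) : heaviside s ∈ Set.Icc 0 1 := by
  unfold heaviside; split_ifs <;> simp

theorem heaviside_eq_of_mul_pos {p q : ℝ} (h : 0 < p * q) : heaviside p = heaviside q := by
  unfold heaviside; split_ifs <;> first | rfl | nlinarith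

theorem heaviside_signVal_mul_sub_eq {b : Bool} {c u u' r : ℝ} (hu : r ≤ |u - c|)
    (hu' : |u' - u| < r) :
    heaviside (signVal b * (u' - c)) = heaviside (signVal b * (u - c)) := by
  have hsame : 0 < (u' - c) * (u - c) := by
    have hgap : 0 < |u - c| * (|u - c| - |u' - u|) :=
      mul_pos ((abs_nonneg _).trans_lt (hu'.trans_le hu)) (by linarith)
    nlinarith [abs_mul_abs_self (u - c), neg_abs_le ((u' - u) * (u - c)),
      abs_mul (u' - u) (u - c)]
  have hsign : signVal b * signVal b = 1 := by cases b <;> norm_num [signVal]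
  exact heaviside_eq_of_mul_pos (by nlinarith)

theorem inv_card_mul_sum_mem_Icc {ι : Type*} (s : Finset ι) {f : ι → ℝ}
    (hf : ∀ i ∈ s, f i ∈ Set.Icc 0 1) : (s.card : ℝ)⁻¹ * ∑ i ∈ s, f i ∈ Set.Icc 0 1 := by
  rcases s.eq_empty_or_nonempty with rfl | hs
  · simp
  have hcard : (0 : ℝ) < s.card := by exact_mod_cast hs.card_pos
  refine ⟨mul_nonneg (inv_nonneg.2 hcard.le) (Finset.sum_nonneg fun i hi => (hf i hi).1), ?_⟩
  rw [inv_mul_le_iff₀ hcard, mul_one]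
  simpa using Finset.sum_le_card_nsmul s f 1 fun i hi => (hf i hi).2

theorem card_attach_filter_eq_inDeg {V : Type*} [DecidableEq V] (A : Finset (V × V)) (v : V) :
    (A.attach.filter fun e => e.1.2 = v).card = inDeg A v := by
  rw [Finset.filter_attach (fun e : V × V => e.2 = v), Finset.card_map, Finset.card_attach, inDeg]

section RegulatoryMap

variable {A : Finset (V × V)} {σ : {e // e ∈ A} → Bool} {T : {e // e ∈ A} → ℝ} {a : ℝ}

theorem mapsTo_regMap_cubeV (ha0 : 0 ≤ a) (ha1 : a ≤ 1) :
    Set.MapsTo (regMap A σ T a) (cubeV V) (cubeV V) := by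
  intro w hw
  refine Set.mem_univ_pi.2 fun v => ?_
  have hinput := inv_card_mul_sum_mem_Icc (A.attach.filter fun e => e.1.2 = v)
    (f := fun e => heaviside (signVal (σ e) * (w e.1.1 - T e))) fun e _ => heaviside_mem_Icc _
  rw [card_attach_filter_eq_inDeg] at hinput
  simpa only [regMap, smul_eq_mul] using
    convex_Icc (0 : ℝ) 1 (Set.mem_univ_pi.1 hw v) hinput ha0 (sub_nonneg.2 ha1)
      (add_sub_cancel a 1)

theorem dist_regMap_le_of_heaviside_eq (ha0 : 0 ≤ a) {w w' : V → ℝ}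
    (h : ∀ e : {e // e ∈ A}, heaviside (signVal (σ e) * (w' e.1.1 - T e)) =
      heaviside (signVal (σ e) * (w e.1.1 - T e))) :
    dist (regMap A σ T a w') (regMap A σ T a w) ≤ a * dist w' w := by
  refine (dist_pi_le_iff (by positivity)).2 fun v => ?_
  have hdiff : regMap A σ T a w' v - regMap A σ T a w v = a * (w' v - w v) := by
    simp only [regMap, h]; ring
  rw [Real.dist_eq, hdiff, abs_mul, abs_of_nonneg ha0, ← Real.dist_eq]
  exact mul_le_mul_of_nonneg_left (dist_le_pi_dist w' w v) ha0

/-- Moving the source coordinate of `e` onto its threshold lands in `Δ_T`. -/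
theorem le_abs_sub_of_ofReal_le_infEDist (hT : T ∈ cubeA A) {w : V → ℝ} (hw : w ∈ cubeV V)
    {r : ℝ} (h : ENNReal.ofReal r ≤ Metric.infEDist w (discSet A T)) (e : {e // e ∈ A}) :
    r ≤ |w e.1.1 - T e| := by
  set w' := update w e.1.1 (T e)
  have hw' : w' ∈ discSet A T := by
    refine ⟨Set.mem_univ_pi.2 fun v => ?_, e, update_self _ _ _⟩
    rcases eq_or_ne v e.1.1 with rfl | hv
    · simpa [w'] using Set.mem_univ_pi.1 hT e
    · simpa [w', hv] using Set.mem_univ_pi.1 hw v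
  have hdist : dist w w' ≤ |w e.1.1 - T e| := by
    refine (dist_pi_le_iff (abs_nonneg _)).2 fun v => ?_
    rcases eq_or_ne v e.1.1 with rfl | hv
    · simp [w', Real.dist_eq]
    · simp [w', hv]
  have hle := h.trans (Metric.infEDist_le_edist_of_mem hw')
  rw [edist_dist, ENNReal.ofReal_le_ofReal_iff dist_nonneg] at hle
  exact hle.trans hdist

theorem contractsNearOrbit_regMap (ha0 : 0 ≤ a) (hT : T ∈ cubeA A) {x : V → ℝ} {r : ℝ}
    (hcube : ∀ t, (regMap A σ T a)^[t] x ∈ cubeV V)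
    (hgap : ∀ t, ENNReal.ofReal r ≤ Metric.infEDist ((regMap A σ T a)^[t] x) (discSet A T)) :
    ContractsNearOrbit (regMap A σ T a) x a r := by
  intro t w hw
  rw [iterate_succ_apply']
  refine dist_regMap_le_of_heaviside_eq ha0 fun e => heaviside_signVal_mul_sub_eq
    (le_abs_sub_of_ofReal_le_infEDist hT (hcube t) (hgap t) e) ?_
  rw [← Real.dist_eq]
  exact (dist_le_pi_dist _ _ _).trans_lt hw

theorem asympPeriod_minimalPeriod {x y : V → ℝ} {τ : ℕ} (hτ : 0 < τ)
    (hy : IsPeriodicPt (regMap A σ T a) τ y) (hy_cube : y ∈ cubeV V)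
    (hxy : Tendsto (fun t => dist ((regMap A σ T a)^[t] x) ((regMap A σ T a)^[t] y))
      atTop (𝓝 0)) :
    asympPeriod A σ T a x (minimalPeriod (regMap A σ T a) y) :=
  ⟨hy.minimalPeriod_pos hτ, y, hy_cube, isPeriodicPt_minimalPeriod _ _,
    fun _ ht htlt => not_isPeriodicPt_of_pos_of_lt_minimalPeriod ht.ne' htlt, hxy⟩

end RegulatoryMap

/-- If `(T,x) ∈ [0,1]^A × [0,1]^V` satisfies
`ε := inf_{t≥0} d_max(F_{G,σ,T,a}^t(x), Δ_T) > 0`, then there are `τ ≥ 1` and `y ∈ [0,1]^V`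
with `F^τ(y) = y`, `d_max(F^t(y), Δ_T) ≥ ε` for every `t`, and
`d_max(F^t(x), F^t(y)) → 0`; in particular the asymptotic period `P(F_{G,σ,T,a}, x)` is
finite. -/
theorem exists_periodic_attractor_of_orbitGap_pos (V : Type*) [Fintype V] [DecidableEq V]
    (A : Finset (V × V)) (σ : {e // e ∈ A} → Bool) (a : ℝ) (ha0 : 0 ≤ a) (ha1 : a < 1)
    (T : {e // e ∈ A} → ℝ) (hT : T ∈ cubeA A) (x : V → ℝ) (hx : x ∈ cubeV V)
    (ε : ℝ≥0∞) (hε : 0 < ε) (hgap : orbitGap A σ T a x = ε) :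
    (∃ τ : ℕ, 1 ≤ τ ∧ ∃ y ∈ cubeV V, (regMap A σ T a)^[τ] y = y ∧
      (∀ t : ℕ, ε ≤ EMetric.infEdist ((regMap A σ T a)^[t] y) (discSet A T)) ∧
      Filter.Tendsto (fun t => dist ((regMap A σ T a)^[t] x) ((regMap A σ T a)^[t] y))
        Filter.atTop (nhds 0)) ∧
    ∃ τ : ℕ, asympPeriod A σ T a x τ := by
  set F := regMap A σ T a
  have hx_cube : ∀ t, F^[t] x ∈ cubeV V :=
    fun t => (mapsTo_regMap_cubeV ha0 ha1.le).iterate t hx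
  have hx_gap : ∀ t, ε ≤ Metric.infEDist (F^[t] x) (discSet A T) := fun t => hgap ▸ iInf_le _ t
  obtain ⟨r, -, hr, hrε⟩ := ENNReal.lt_iff_exists_real_btwn.1 hε
  have hcontr : ContractsNearOrbit F x a r :=
    contractsNearOrbit_regMap ha0 hT hx_cube fun t => hrε.le.trans (hx_gap t)
  obtain ⟨s, τ, hτ, hret⟩ := (isCompact_univ_pi fun _ => isCompact_Icc).exists_dist_add_lt
    hx_cube (ENNReal.ofReal_pos.1 hr)
  obtain ⟨y₀, s', hy₀, hattract₀⟩ := hcontr.exists_isPeriodicPt ha0 ha1 hτ hret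
  obtain ⟨y, hy, hattract⟩ := hy₀.exists_tendsto_dist_iterate hτ hattract₀
  have hy_cube := hy.iterate_mem_of_tendsto_dist hτ hattract
    (isClosed_set_pi fun _ _ => isClosed_Icc) hx_cube
  have hy_gap := hy.iterate_mem_of_tendsto_dist hτ hattract
    (isClosed_le continuous_const Metric.continuous_infEDist) hx_gap
  exact ⟨⟨τ, hτ, y, hy_cube 0, hy, hy_gap, hattract⟩,
    _, asympPeriod_minimalPeriod hτ hy (hy_cube 0) hattract⟩
end

section
/- Let d ≥ 1 and N ≥ 1 be natural numbers and a ∈ (0,1). Let D ⊆ {0,1,…,d}^N be a set of N-blocks with cardinality #D ≤ ((1+a)/(2a))^N. Define T_D := { Σ_{t=0}^∞ a^t·k_t : (k_t)_{t≥0} is a sequence with values in {0,1,…,d} such that for every j ≥ 0 the reversed block (k_{(j+1)N−1}, k_{(j+1)N−2}, …, k_{jN}) belongs to D }. Then the closure of T_D in ℝ has Lebesgue measure zero. -/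
/-!
Grouping the digits into blocks of length `N` writes every point of `T_D` as `∑ (a ^ N) ^ j * v j`
with each `v j` one of at most `#D` block values. Truncating such a series after `m` terms leaves
at most `#D ^ m` partial sums, each within `O(a ^ (m * N))` of the points it approximates, so the
closure is covered by finitely many closed intervals of total length
`O((#D * a ^ N) ^ m) = O(((1 + a) / 2) ^ (m * N)) → 0`.
-/

open MeasureTheory Metric Filter Topology

theorem HasSum.sum_blocks {α : Type*} [AddCommMonoid α] [TopologicalSpace α] [ContinuousAdd α]
    [RegularSpace α] {f : ℕ → α} {x : α} (N : ℕ) [NeZero N] (hf : HasSum f x) :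
    HasSum (fun j => ∑ i : Fin N, f (j * N + i)) x :=
  ((Nat.divModEquiv N).symm.hasSum_iff.mpr hf).prod_fiberwise fun _ => hasSum_fintype _

theorem volume_closure_le_of_subset_biUnion_closedBall {s : Set ℝ} (F : Finset ℝ) {δ : ℝ}
    (hs : s ⊆ ⋃ y ∈ F, closedBall y δ) :
    volume (closure s) ≤ ENNReal.ofReal (F.card * (2 * δ)) := by
  have hclosed : IsClosed (⋃ y ∈ F, closedBall y δ) :=
    F.finite_toSet.isClosed_biUnion fun _ _ => isClosed_closedBall
  calc volume (closure s) ≤ volume (⋃ y ∈ F, closedBall y δ) :=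
        measure_mono (closure_minimal hs hclosed)
    _ ≤ ∑ y ∈ F, volume (closedBall y δ) := measure_biUnion_finset_le F _
    _ = ENNReal.ofReal (F.card * (2 * δ)) := by
        simp only [Real.volume_closedBall, Finset.sum_const, nsmul_eq_mul]
        rw [ENNReal.ofReal_mul (Nat.cast_nonneg _), ENNReal.ofReal_natCast]

theorem dist_sum_range_le_of_hasSum_pow_mul {r M x : ℝ} {c : ℕ → ℝ} (hr : |r| < 1)
    (hc : ∀ j, |c j| ≤ M) (h : HasSum (fun j => r ^ j * c j) x) (m : ℕ) :
    dist (∑ j ∈ Finset.range m, r ^ j * c j) x ≤ M * |r| ^ m / (1 - |r|) := by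
  refine dist_le_of_le_geometric_of_tendsto |r| M hr (fun n => ?_) h.tendsto_sum_nat m
  rw [dist_comm, Finset.sum_range_succ, dist_eq_norm, add_sub_cancel_left, Real.norm_eq_abs,
    abs_mul, abs_pow, mul_comm]
  exact mul_le_mul_of_nonneg_right (hc n) (by positivity)

def digitSums (r : ℝ) (V : Set ℝ) : Set ℝ :=
  {x | ∃ c : ℕ → ℝ, (∀ j, c j ∈ V) ∧ HasSum (fun j => r ^ j * c j) x}

theorem volume_closure_digitSums_eq_zero {r : ℝ} (V : Finset ℝ) (hr : |r| < 1)
    (hV : V.card * |r| < 1) : volume (closure (digitSums r V)) = 0 := by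
  set M := ∑ v ∈ V, |v|
  have hM : ∀ v ∈ V, |v| ≤ M := fun v hv =>
    Finset.single_le_sum (f := fun v => |v|) (fun _ _ => abs_nonneg _) hv
  have hbound : ∀ m : ℕ, volume (closure (digitSums r V)) ≤
      ENNReal.ofReal ((V.card * |r|) ^ m * (2 * M / (1 - |r|))) := by
    intro m
    set F := (Fintype.piFinset fun _ : Fin m => V).image
      fun c : Fin m → ℝ => ∑ j : Fin m, r ^ (j : ℕ) * c j
    have hcover : digitSums r V ⊆ ⋃ y ∈ F, closedBall y (M * |r| ^ m / (1 - |r|)) := by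
      rintro x ⟨c, hcV, hx⟩
      refine Set.mem_biUnion (Finset.mem_image_of_mem _
        (Fintype.mem_piFinset.2 fun j : Fin m => hcV j)) ?_
      rw [mem_closedBall', Fin.sum_univ_eq_sum_range (fun j => r ^ j * c j)]
      exact dist_sum_range_le_of_hasSum_pow_mul hr (fun j => hM _ (hcV j)) hx m
    have hF : (F.card : ℝ) ≤ V.card ^ m := by
      exact_mod_cast Finset.card_image_le.trans (by simp)
    refine (volume_closure_le_of_subset_biUnion_closedBall F hcover).trans
      (ENNReal.ofReal_le_ofReal ?_)
    have hM0 : 0 ≤ M := Finset.sum_nonneg fun _ _ => abs_nonneg _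
    have hδ : 0 ≤ 2 * (M * |r| ^ m / (1 - |r|)) := by
      have : 0 < 1 - |r| := by linarith
      positivity
    calc (F.card : ℝ) * (2 * (M * |r| ^ m / (1 - |r|)))
        ≤ V.card ^ m * (2 * (M * |r| ^ m / (1 - |r|))) := mul_le_mul_of_nonneg_right hF hδ
      _ = (V.card * |r|) ^ m * (2 * M / (1 - |r|)) := by ring
  have hlim : Tendsto (fun m : ℕ => ENNReal.ofReal ((V.card * |r|) ^ m * (2 * M / (1 - |r|))))
      atTop (𝓝 0) := by
    rw [← ENNReal.ofReal_zero]
    refine ENNReal.tendsto_ofReal ?_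
    simpa using (tendsto_pow_atTop_nhds_zero_of_lt_one (by positivity) hV).mul_const
      (2 * M / (1 - |r|))
  exact le_antisymm (ge_of_tendsto' hlim hbound) bot_le

def reversedBlock (N : ℕ) (k : ℕ → ℕ) (j : ℕ) : Fin N → ℕ :=
  fun i => k ((j + 1) * N - 1 - i)

def blockValue {N : ℕ} (a : ℝ) (b : Fin N → ℕ) : ℝ :=
  ∑ i : Fin N, a ^ (N - 1 - (i : ℕ)) * b i

def blockRestrictedSums (a : ℝ) (d : ℕ) {N : ℕ} (D : Finset (Fin N → ℕ)) : Set ℝ :=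
  {x | ∃ k : ℕ → ℕ, (∀ t, k t ≤ d) ∧ (∀ j, reversedBlock N k j ∈ D) ∧
    x = ∑' t : ℕ, a ^ t * k t}

theorem sum_block_eq_pow_mul_blockValue (a : ℝ) (N : ℕ) (k : ℕ → ℕ) (j : ℕ) :
    ∑ i : Fin N, a ^ (j * N + i) * k (j * N + i) =
      (a ^ N) ^ j * blockValue a (reversedBlock N k j) := by
  rw [blockValue, Finset.mul_sum, ← Equiv.sum_comp Fin.revPerm]
  refine Finset.sum_congr rfl fun i _ => ?_
  have hi := i.isLt
  have hpos : j * N + (N - 1 - i) = (j + 1) * N - 1 - i := by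
    rw [add_mul, one_mul]; omega
  simp only [Fin.revPerm_apply, Fin.val_rev, reversedBlock]
  rw [show N - (i + 1) = N - 1 - i by omega, hpos, ← mul_assoc, ← pow_mul, ← pow_add,
    mul_comm N j, ← hpos]

theorem blockRestrictedSums_subset_digitSums {a : ℝ} (ha : a ∈ Set.Ioo (0 : ℝ) 1) (d N : ℕ)
    [NeZero N] (D : Finset (Fin N → ℕ)) :
    blockRestrictedSums a d D ⊆ digitSums (a ^ N) (D.image (blockValue a)) := by
  rintro x ⟨k, hkd, hkD, rfl⟩
  have hsum : Summable fun t : ℕ => a ^ t * k t := by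
    refine Summable.of_nonneg_of_le
      (fun t => mul_nonneg (pow_nonneg ha.1.le t) (Nat.cast_nonneg _)) (fun t => ?_)
      ((summable_geometric_of_lt_one ha.1.le ha.2).mul_right (d : ℝ))
    exact mul_le_mul_of_nonneg_left (by exact_mod_cast hkd t) (pow_nonneg ha.1.le t)
  refine ⟨fun j => blockValue a (reversedBlock N k j),
    fun j => Finset.mem_image_of_mem _ (hkD j), ?_⟩
  simpa only [sum_block_eq_pow_mul_blockValue] using hsum.hasSum.sum_blocks N

theorem closure_blockRestricted_sums_measure_zero_general (d N : ℕ) (hN : 1 ≤ N)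
    (a : ℝ) (ha : a ∈ Set.Ioo (0:ℝ) 1) (D : Finset (Fin N → ℕ))
    (hcard : (D.card : ℝ) ≤ ((1 + a) / (2 * a)) ^ N) :
    MeasureTheory.volume (closure {x : ℝ | ∃ k : ℕ → ℕ, (∀ t, k t ≤ d) ∧
      (∀ j : ℕ, (fun i : Fin N => k ((j + 1) * N - 1 - (i : ℕ))) ∈ D) ∧
      x = ∑' t : ℕ, a ^ t * k t}) = 0 := by
  change volume (closure (blockRestrictedSums a d D)) = 0
  have : NeZero N := ⟨by omega⟩
  have ha0 : 0 < a := ha.1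
  have hrN : |a ^ N| = a ^ N := abs_of_pos (pow_pos ha0 N)
  have hcount : ((D.image (blockValue a)).card : ℝ) * |a ^ N| < 1 := by
    calc ((D.image (blockValue a)).card : ℝ) * |a ^ N| ≤ D.card * a ^ N := by
          rw [hrN]; gcongr; exact_mod_cast Finset.card_image_le
      _ ≤ ((1 + a) / (2 * a)) ^ N * a ^ N := by gcongr
      _ = ((1 + a) / 2) ^ N := by rw [← mul_pow]; field_simp
      _ < 1 := pow_lt_one₀ (by linarith) (by linarith [ha.2]) (NeZero.ne N)
  have hr : |a ^ N| < 1 := by rw [hrN]; exact pow_lt_one₀ ha0.le ha.2 (NeZero.ne N)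
  exact measure_mono_null (closure_mono (blockRestrictedSums_subset_digitSums ha d N D))
    (volume_closure_digitSums_eq_zero _ hr hcount)

/-- Let `d ≥ 1`, `N ≥ 1`, `a ∈ (0,1)`, and let `D` be a set of `N`-blocks
with entries in `{0,…,d}` with `#D ≤ ((1+a)/(2a))^N`. Let `T_D` be the set of sums
`Σ_{t=0}^∞ a^t k_t` over digit sequences `(k_t)` in `{0,…,d}` all of whose consecutive
length-`N` blocks, read in reversed order `(k_{(j+1)N-1}, …, k_{jN})`, lie in `D`.
Then the closure of `T_D` has Lebesgue measure zero. -/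
theorem closure_blockRestricted_sums_measure_zero (d N : ℕ) (hd : 1 ≤ d) (hN : 1 ≤ N)
    (a : ℝ) (ha : a ∈ Set.Ioo (0:ℝ) 1) (D : Finset (Fin N → ℕ))
    (hDval : ∀ b ∈ D, ∀ i, b i ≤ d)
    (hcard : (D.card : ℝ) ≤ ((1 + a) / (2 * a)) ^ N) :
    MeasureTheory.volume (closure {x : ℝ | ∃ k : ℕ → ℕ, (∀ t, k t ≤ d) ∧
      (∀ j : ℕ, (fun i : Fin N => k ((j + 1) * N - 1 - (i : ℕ))) ∈ D) ∧
      x = ∑' t : ℕ, a ^ t * k t}) = 0 :=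
  closure_blockRestricted_sums_measure_zero_general d N hN a ha D hcard
end

section
/- Let V be a finite vertex set and G=(V,A) a digraph, and suppose a ∈ [0,1) satisfies a < 1/(Id(u)+1) for every u ∈ V. Then for every sign vector σ ∈ {−1,1}^A, the set O_{G,σ,a} := {(T,x) ∈ [0,1]^A × [0,1]^V : inf_{t≥0} d_max(F_{G,σ,T,a}^t(x), Δ_T) > 0} is open and dense in [0,1]^A × [0,1]^V, and its complement has Lebesgue measure zero. -/
open MeasureTheory Filter Topology
open scoped ENNReal

variable {V : Type*} [Fintype V] [DecidableEq V]

/-!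
Along an orbit, the coordinate `y t` of a vertex `u` obeys `y (t+1) = a y t + (1 - a) s` with `s`
among the `Id(u) + 1` values `k / Id(u)`. Hence `y t = a^t y 0 + r` with `r` in a finite set, and
from time `m` on `y t` lies within `2 a^m` of one of at most `(Id(u) + 1)^m` points. If the orbit
accumulates at a threshold `T e`, either it hits `T e` exactly, which puts `(T, x)` on one of
countably many hyperplanes `T e = a^t x u + r`, or `T e` lies in a Cantor-like set of measure at
most `4 ((Id(u) + 1) a)^m` for every `m`, a null set because `(Id(u) + 1) a < 1`. So the
complement of `O` is null, and `O` is dense. It is open because a perturbation of `(T, x)` by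
less than a third of the orbit's margin crosses no threshold, so the perturbed orbit shadows the
original one.
-/

open Set

section AffineReach

/-- The values `y t - a ^ t * y 0` reachable by sequences obeying
`y (t + 1) = a * y t + (1 - a) * s` with `s ∈ S`. -/
noncomputable def affineReach (a : ℝ) (S : Finset ℝ) : ℕ → Finset ℝ
  | 0 => {0}
  | t + 1 => (affineReach a S t ×ˢ S).image fun p => a * p.1 + (1 - a) * p.2

variable {a : ℝ} {S : Finset ℝ}

lemma mem_affineReach_succ {t : ℕ} {r : ℝ} :
    r ∈ affineReach a S (t + 1) ↔ ∃ p ∈ affineReach a S t, ∃ s ∈ S, a * p + (1 - a) * s = r := by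
  simp [affineReach, and_assoc]

lemma card_affineReach_le (t : ℕ) : (affineReach a S t).card ≤ S.card ^ t := by
  induction t with
  | zero => simp [affineReach]
  | succ t ih =>
    calc (affineReach a S (t + 1)).card ≤ (affineReach a S t ×ˢ S).card := Finset.card_image_le
      _ ≤ S.card ^ t * S.card := by rw [Finset.card_product]; gcongr
      _ = S.card ^ (t + 1) := (pow_succ _ _).symm

lemma exists_eq_pow_mul_add_of_mem_affineReach_add {k m : ℕ} {r : ℝ}
    (hr : r ∈ affineReach a S (k + m)) :
    ∃ q ∈ affineReach a S k, ∃ r' ∈ affineReach a S m, r = a ^ m * q + r' := by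
  induction m generalizing r with
  | zero => exact ⟨r, hr, 0, by simp [affineReach], by simp⟩
  | succ m ih =>
    obtain ⟨p, hp, s, hs, rfl⟩ := mem_affineReach_succ.1 hr
    obtain ⟨q, hq, r', hr', rfl⟩ := ih hp
    exact ⟨q, hq, a * r' + (1 - a) * s, mem_affineReach_succ.2 ⟨r', hr', s, hs, rfl⟩, by ring⟩

lemma affineReach_subset_Icc (ha0 : 0 ≤ a) (ha1 : a ≤ 1) (hS : ∀ s ∈ S, s ∈ Icc (0 : ℝ) 1)
    (t : ℕ) : ∀ r ∈ affineReach a S t, r ∈ Icc (0 : ℝ) 1 := by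
  induction t with
  | zero => simp [affineReach]
  | succ t ih =>
    rintro r hr
    obtain ⟨p, hp, s, hs, rfl⟩ := mem_affineReach_succ.1 hr
    exact convex_Icc 0 1 (ih p hp) (hS s hs) ha0 (sub_nonneg.2 ha1) (by ring)

lemma exists_mem_affineReach_of_recurrence {y : ℕ → ℝ}
    (hy : ∀ t, ∃ s ∈ S, y (t + 1) = a * y t + (1 - a) * s) (t : ℕ) :
    ∃ r ∈ affineReach a S t, y t = a ^ t * y 0 + r := by
  induction t with
  | zero => exact ⟨0, by simp [affineReach], by simp⟩
  | succ t ih =>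
    obtain ⟨r, hr, hyt⟩ := ih
    obtain ⟨s, hs, hys⟩ := hy t
    exact ⟨a * r + (1 - a) * s, mem_affineReach_succ.2 ⟨r, hr, s, hs, rfl⟩, by rw [hys, hyt]; ring⟩

/-- The attractor of the iterated function system `r ↦ a * r + (1 - a) * s`, `s ∈ S`, seen
through the finite approximations `affineReach a S m`. -/
def affineAttractor (a : ℝ) (S : Finset ℝ) : Set ℝ :=
  ⋂ m, ⋃ r ∈ affineReach a S m, Metric.closedBall r (2 * a ^ m)

open MeasureTheory Filter in
lemma volume_affineAttractor (ha0 : 0 ≤ a) (hS : S.card * a < 1) :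
    volume (affineAttractor a S) = 0 := by
  have hbound : ∀ m : ℕ, volume (affineAttractor a S) ≤ ENNReal.ofReal (4 * (S.card * a) ^ m) := by
    intro m
    calc volume (affineAttractor a S)
        ≤ volume (⋃ r ∈ affineReach a S m, Metric.closedBall r (2 * a ^ m)) :=
          measure_mono (iInter_subset _ m)
      _ ≤ ∑ r ∈ affineReach a S m, volume (Metric.closedBall r (2 * a ^ m)) :=
          measure_biUnion_finset_le _ _
      _ = ∑ _r ∈ affineReach a S m, ENNReal.ofReal (4 * a ^ m) :=
          Finset.sum_congr rfl fun _ _ => by rw [Real.volume_closedBall]; ring_nf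
      _ = (affineReach a S m).card * ENNReal.ofReal (4 * a ^ m) := by
          rw [Finset.sum_const, nsmul_eq_mul]
      _ ≤ (S.card ^ m : ℕ) * ENNReal.ofReal (4 * a ^ m) := by
          gcongr; exact_mod_cast card_affineReach_le m
      _ = ENNReal.ofReal (4 * (S.card * a) ^ m) := by
          rw [← ENNReal.ofReal_natCast, ← ENNReal.ofReal_mul (by positivity)]
          push_cast; ring_nf
  have hlim : Tendsto (fun m : ℕ => ENNReal.ofReal (4 * (S.card * a) ^ m)) atTop (𝓝 0) := by
    simpa using ENNReal.tendsto_ofReal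
      ((tendsto_pow_atTop_nhds_zero_of_lt_one (by positivity) hS).const_mul 4)
  exact nonpos_iff_eq_zero.1 (ge_of_tendsto' hlim hbound)

lemma exists_mem_affineReach_abs_sub_le {y : ℕ → ℝ} (ha0 : 0 ≤ a) (ha1 : a ≤ 1)
    (hS : ∀ s ∈ S, s ∈ Icc (0 : ℝ) 1) (hy0 : y 0 ∈ Icc (0 : ℝ) 1)
    (hy : ∀ t, ∃ s ∈ S, y (t + 1) = a * y t + (1 - a) * s) {m t : ℕ} (hmt : m ≤ t) :
    ∃ r' ∈ affineReach a S m, |y t - r'| ≤ 2 * a ^ m := by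
  obtain ⟨r, hr, hyt⟩ := exists_mem_affineReach_of_recurrence hy t
  obtain ⟨k, rfl⟩ := Nat.exists_eq_add_of_le' hmt
  obtain ⟨q, hq, r', hr', rfl⟩ := exists_eq_pow_mul_add_of_mem_affineReach_add hr
  refine ⟨r', hr', ?_⟩
  have hq01 := affineReach_subset_Icc ha0 ha1 hS k q hq
  have hpow : a ^ (k + m) ≤ a ^ m := pow_le_pow_of_le_one ha0 ha1 (Nat.le_add_left m k)
  have hsub : y (k + m) - r' = a ^ (k + m) * y 0 + a ^ m * q := by rw [hyt]; ring
  rw [hsub, two_mul]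
  refine (abs_add_le _ _).trans (add_le_add ?_ ?_) <;>
    rw [abs_mul, abs_of_nonneg (pow_nonneg ha0 _)]
  · exact (mul_le_of_le_one_right (pow_nonneg ha0 _)
      (abs_le.2 ⟨by linarith [hy0.1], hy0.2⟩)).trans hpow
  · exact mul_le_of_le_one_right (pow_nonneg ha0 _) (abs_le.2 ⟨by linarith [hq01.1], hq01.2⟩)

lemma exists_eq_or_mem_affineAttractor {y : ℕ → ℝ} (ha0 : 0 ≤ a) (ha1 : a ≤ 1)
    (hS : ∀ s ∈ S, s ∈ Icc (0 : ℝ) 1) (hy0 : y 0 ∈ Icc (0 : ℝ) 1)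
    (hy : ∀ t, ∃ s ∈ S, y (t + 1) = a * y t + (1 - a) * s) {c : ℝ} (hc : c ∈ closure (range y)) :
    (∃ t, y t = c) ∨ c ∈ affineAttractor a S := by
  refine or_iff_not_imp_left.2 fun hne => mem_iInter.2 fun m => ?_
  have hsplit : closure (range y) = y '' Iio m ∪ closure (y '' Ici m) := by
    rw [← image_univ, ← Iio_union_Ici (a := m), image_union, closure_union,
      ((finite_Iio m).image y).isClosed.closure_eq]
  rw [hsplit] at hc
  refine hc.resolve_left (fun ⟨t, _, ht⟩ => hne ⟨t, ht⟩) |> closure_minimal ?_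
    ((Finset.finite_toSet _).isClosed_biUnion fun _ _ => Metric.isClosed_closedBall)
  rintro _ ⟨t, hmt, rfl⟩
  obtain ⟨r', hr', hdist⟩ := exists_mem_affineReach_abs_sub_le ha0 ha1 hS hy0 hy (mem_Ici.1 hmt)
  exact mem_biUnion (Finset.mem_coe.2 hr') (Metric.mem_closedBall.2 hdist)

end AffineReach

section NullSets

open MeasureTheory

variable {ι Y : Type*} [Fintype ι] [MeasurableSpace Y] (ν : Measure Y)

lemma prod_setOf_apply_mem_null {Z : Set ℝ} (hZ : volume Z = 0) (i : ι) :
    (volume.prod ν) {p : (ι → ℝ) × Y | p.1 i ∈ Z} = 0 :=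
  Measure.quasiMeasurePreserving_fst.preimage_null
    ((Measure.quasiMeasurePreserving_eval (fun _ : ι => (volume : Measure ℝ)) i).preimage_null hZ)

lemma prod_setOf_apply_eq_null [SFinite ν] {f : Y → ℝ} (hf : Measurable f) (i : ι) :
    (volume.prod ν) {p : (ι → ℝ) × Y | p.1 i = f p.2} = 0 := by
  have hmeas : MeasurableSet {p : (ι → ℝ) × Y | p.1 i = f p.2} :=
    measurableSet_eq_fun (by fun_prop) (hf.comp measurable_snd)
  rw [Measure.prod_apply_symm hmeas]
  refine (lintegral_congr fun y => ?_).trans lintegral_zero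
  exact (Measure.quasiMeasurePreserving_eval (fun _ : ι => (volume : Measure ℝ)) i).preimage_null
    (Real.volume_singleton (a := f y))

end NullSets

open MeasureTheory in
lemma dense_setOf_of_measure_eq_zero {X : Type*} [TopologicalSpace X] [MeasurableSpace X]
    (μ : Measure X) [μ.IsOpenPosMeasure] {W : Set X} (hW : W ⊆ closure (interior W))
    {P : X → Prop} (hP : μ {x | x ∈ W ∧ ¬ P x} = 0) : Dense {p : W | P p} := by
  rw [Subtype.dense_iff]
  have hN : Dense {x | x ∈ W ∧ ¬ P x}ᶜ :=
    interior_eq_empty_iff_dense_compl.1 (Measure.interior_eq_empty_of_null hP)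
  calc W ⊆ closure (interior W) := hW
    _ ⊆ closure (closure (interior W ∩ {x | x ∈ W ∧ ¬ P x}ᶜ)) :=
      closure_mono (hN.open_subset_closure_inter isOpen_interior)
    _ ⊆ closure (Subtype.val '' {p : W | P p}) := by
      rw [closure_closure]
      refine closure_mono fun x ⟨hxW, hxP⟩ => ⟨⟨x, interior_subset hxW⟩, ?_, rfl⟩
      exact not_not.1 fun h => hxP ⟨interior_subset hxW, h⟩

lemma unitCube_subset_closure_interior (ι : Type*) [Finite ι] :
    pi univ (fun _ : ι => Icc (0 : ℝ) 1) ⊆ closure (interior (pi univ fun _ => Icc 0 1)) := by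
  rw [interior_pi_set finite_univ, closure_pi_set, interior_Icc, closure_Ioo zero_ne_one]

lemma heaviside_mul_eq_of_abs_sub_lt {s s' : ℝ} (h : |s' - s| < |s|) (c : ℝ) :
    heaviside (c * s') = heaviside (c * s) := by
  have hs : s ≠ 0 := by rintro rfl; simp at h; linarith [abs_nonneg s']
  have hsign : 0 ≤ c * s' ↔ 0 ≤ c * s := by
    rcases hs.lt_or_gt with hs | hs
    · rw [abs_of_neg hs, abs_lt] at h
      constructor <;> intro <;> nlinarith
    · rw [abs_of_pos hs, abs_lt] at h
      constructor <;> intro <;> nlinarith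
  simp only [heaviside, hsign]

lemma abs_sub_apply_lt_of_dist_lt {ι : Type*} [Fintype ι] {f g : ι → ℝ} {δ : ℝ} (h : dist f g < δ)
    (i : ι) : |f i - g i| < δ := by
  simpa [Real.dist_eq] using (dist_le_pi_dist f g i).trans_lt h

section Network

variable {V : Type*} [DecidableEq V] (A : Finset (V × V))

noncomputable def interactionValues (v : V) : Finset ℝ :=
  (Finset.range (inDeg A v + 1)).image fun k : ℕ => (inDeg A v : ℝ)⁻¹ * k

lemma card_interactionValues_le (v : V) : (interactionValues A v).card ≤ inDeg A v + 1 :=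
  Finset.card_image_le.trans (Finset.card_range _).le

lemma interactionValues_subset_Icc (v : V) : ∀ s ∈ interactionValues A v, s ∈ Icc (0 : ℝ) 1 := by
  simp only [interactionValues, Finset.mem_image, Finset.mem_range, forall_exists_index, and_imp]
  rintro _ k hk rfl
  rcases (inDeg A v).eq_zero_or_pos with h0 | hpos
  · simp [h0]
  · have hd : (0 : ℝ) < inDeg A v := by exact_mod_cast hpos
    refine ⟨by positivity, ?_⟩
    rw [inv_mul_le_iff₀ hd, mul_one]
    exact_mod_cast Nat.lt_succ_iff.1 hk

variable [Fintype V] (σ : {e // e ∈ A} → Bool) (a : ℝ)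

lemma exists_regMap_apply_eq (T : {e // e ∈ A} → ℝ) (x : V → ℝ) (v : V) :
    ∃ s ∈ interactionValues A v, regMap A σ T a x v = a * x v + (1 - a) * s := by
  refine ⟨_, ?_, rfl⟩
  have hcard : (A.attach.filter fun e => e.val.2 = v).card = inDeg A v := by
    rw [Finset.filter_attach (fun e : V × V => e.2 = v), Finset.card_map, Finset.card_attach, inDeg]
  simp only [heaviside, Finset.sum_boole, interactionValues, Finset.mem_image, Finset.mem_range]
  exact ⟨_, Nat.lt_succ_of_le (hcard ▸ Finset.card_filter_le _ _), rfl⟩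

lemma regMap_mapsTo_cubeV (ha0 : 0 ≤ a) (ha1 : a ≤ 1) (T : {e // e ∈ A} → ℝ) :
    MapsTo (regMap A σ T a) (cubeV V) (cubeV V) := by
  intro x hx v _
  obtain ⟨s, hs, hv⟩ := exists_regMap_apply_eq A σ a T x v
  rw [hv]
  exact convex_Icc 0 1 (hx v trivial) (interactionValues_subset_Icc A v s hs) ha0
    (sub_nonneg.2 ha1) (by ring)

lemma regMap_sub_regMap_of_heaviside_eq {T T' : {e // e ∈ A} → ℝ} {x x' : V → ℝ}
    (h : ∀ e : {e // e ∈ A}, heaviside (signVal (σ e) * (x' e.1.1 - T' e)) =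
      heaviside (signVal (σ e) * (x e.1.1 - T e))) (v : V) :
    regMap A σ T' a x' v - regMap A σ T a x v = a * (x' v - x v) := by
  simp only [regMap, h]
  ring

lemma infEDist_discSet {T : {e // e ∈ A} → ℝ} (hT : T ∈ cubeA A) {y : V → ℝ} (hy : y ∈ cubeV V) :
    Metric.infEDist y (discSet A T) = ⨅ e : {e // e ∈ A}, edist (y e.1.1) (T e) := by
  refine le_antisymm (le_iInf fun e => ?_) (Metric.le_infEDist.2 ?_)
  · have hmem : Function.update y e.1.1 (T e) ∈ discSet A T := by
      refine ⟨fun v _ => ?_, e, Function.update_self _ _ _⟩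
      rcases eq_or_ne v e.1.1 with rfl | hv
      · rw [Function.update_self]; exact hT e trivial
      · rw [Function.update_of_ne hv]; exact hy v trivial
    refine (Metric.infEDist_le_edist_of_mem hmem).trans (edist_pi_le_iff.2 fun v => ?_)
    rcases eq_or_ne v e.1.1 with rfl | hv
    · rw [Function.update_self]
    · simp [Function.update_of_ne hv]
  · rintro z ⟨-, e, hze⟩
    calc ⨅ e, edist (y e.1.1) (T e) ≤ edist (y e.1.1) (T e) := iInf_le _ e
      _ = edist (y e.1.1) (z e.1.1) := by rw [hze]
      _ ≤ edist y z := edist_le_pi_edist y z _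

variable {a}

lemma orbitGap_eq_iInf_edist (ha0 : 0 ≤ a) (ha1 : a ≤ 1) {T : {e // e ∈ A} → ℝ} (hT : T ∈ cubeA A)
    {x : V → ℝ} (hx : x ∈ cubeV V) :
    orbitGap A σ T a x =
      ⨅ e : {e // e ∈ A}, ⨅ t : ℕ, edist ((regMap A σ T a)^[t] x e.1.1) (T e) := by
  rw [orbitGap, iInf_comm]
  exact iInf_congr fun t =>
    infEDist_discSet A hT ((regMap_mapsTo_cubeV A σ a ha0 ha1 T).iterate t hx)

lemma orbitGap_pos_iff (ha0 : 0 ≤ a) (ha1 : a ≤ 1) {T : {e // e ∈ A} → ℝ} (hT : T ∈ cubeA A)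
    {x : V → ℝ} (hx : x ∈ cubeV V) :
    0 < orbitGap A σ T a x ↔
      ∃ ε > 0, ∀ (t : ℕ) (e : {e // e ∈ A}), ε ≤ |(regMap A σ T a)^[t] x e.1.1 - T e| := by
  rw [orbitGap_eq_iInf_edist A σ ha0 ha1 hT hx]
  constructor
  · intro h
    obtain ⟨ε, -, hε0, hε⟩ := ENNReal.lt_iff_exists_real_btwn.1 h
    refine ⟨ε, ENNReal.ofReal_pos.1 hε0, fun t e => ?_⟩
    have hle := hε.le.trans ((iInf_le _ e).trans (iInf_le _ t))
    rwa [edist_dist, Real.dist_eq, ENNReal.ofReal_le_ofReal_iff (abs_nonneg _)] at hle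
  · rintro ⟨ε, hε0, hε⟩
    refine (ENNReal.ofReal_pos.2 hε0).trans_le (le_iInf₂ fun e t => ?_)
    rw [edist_dist, Real.dist_eq]
    exact ENNReal.ofReal_le_ofReal (hε t e)

lemma exists_mem_closure_of_orbitGap_eq_zero (ha0 : 0 ≤ a) (ha1 : a ≤ 1) {T : {e // e ∈ A} → ℝ}
    (hT : T ∈ cubeA A) {x : V → ℝ} (hx : x ∈ cubeV V) (h : orbitGap A σ T a x = 0) :
    ∃ e : {e // e ∈ A}, T e ∈ closure (range fun t => (regMap A σ T a)^[t] x e.1.1) := by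
  rw [orbitGap_eq_iInf_edist A σ ha0 ha1 hT hx] at h
  rcases isEmpty_or_nonempty {e // e ∈ A} with hA | hA
  · rw [iInf_of_empty] at h
    exact absurd h ENNReal.top_ne_zero
  obtain ⟨e, he⟩ := exists_eq_ciInf_of_finite (f := fun e : {e // e ∈ A} =>
    ⨅ t : ℕ, edist ((regMap A σ T a)^[t] x e.1.1) (T e))
  refine ⟨e, Metric.mem_closure_iff_infEDist_zero.2 ?_⟩
  simp only [← iUnion_singleton_eq_range, Metric.infEDist_iUnion, Metric.infEDist_singleton]
  simpa [edist_comm] using he.trans h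

lemma dist_regMap_lt (ha0 : 0 ≤ a) (ha1 : a ≤ 1) {T T' : {e // e ∈ A} → ℝ} {y y' : V → ℝ} {δ : ℝ}
    (hT : dist T' T < δ) (hy : dist y' y < δ) (hsep : ∀ e : {e // e ∈ A}, 2 * δ ≤ |y e.1.1 - T e|) :
    dist (regMap A σ T' a y') (regMap A σ T a y) < δ := by
  have hyv := abs_sub_apply_lt_of_dist_lt hy
  have hTe := abs_sub_apply_lt_of_dist_lt hT
  have hsign : ∀ e : {e // e ∈ A}, heaviside (signVal (σ e) * (y' e.1.1 - T' e)) =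
      heaviside (signVal (σ e) * (y e.1.1 - T e)) := fun e =>
    heaviside_mul_eq_of_abs_sub_lt (calc
      |y' e.1.1 - T' e - (y e.1.1 - T e)| = |(y' e.1.1 - y e.1.1) - (T' e - T e)| := by ring_nf
      _ ≤ |y' e.1.1 - y e.1.1| + |T' e - T e| := abs_sub _ _
      _ < 2 * δ := by linarith [hyv e.1.1, hTe e]
      _ ≤ |y e.1.1 - T e| := hsep e) _
  rw [dist_pi_lt_iff ((dist_nonneg).trans_lt hy)]
  intro v
  rw [Real.dist_eq, regMap_sub_regMap_of_heaviside_eq A σ a hsign, abs_mul, abs_of_nonneg ha0]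
  exact (mul_le_of_le_one_left (abs_nonneg _) ha1).trans_lt (hyv v)

/-- The perturbed orbit crosses no threshold, so the two orbits differ only through the
contraction by `a`. -/
lemma dist_iterate_regMap_lt (ha0 : 0 ≤ a) (ha1 : a ≤ 1) {T T' : {e // e ∈ A} → ℝ} {x x' : V → ℝ}
    {δ : ℝ} (hT : dist T' T < δ) (hx : dist x' x < δ)
    (hsep : ∀ (t : ℕ) (e : {e // e ∈ A}), 2 * δ ≤ |(regMap A σ T a)^[t] x e.1.1 - T e|) (t : ℕ) :
    dist ((regMap A σ T' a)^[t] x') ((regMap A σ T a)^[t] x) < δ := by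
  induction t with
  | zero => exact hx
  | succ t ih =>
    rw [Function.iterate_succ_apply', Function.iterate_succ_apply']
    exact dist_regMap_lt A σ ha0 ha1 hT ih (hsep t)

theorem isOpen_setOf_orbitGap_pos (ha0 : 0 ≤ a) (ha1 : a ≤ 1) :
    IsOpen {p : ↥(cubeA A ×ˢ cubeV V) | 0 < orbitGap A σ p.val.1 a p.val.2} := by
  rw [Metric.isOpen_iff]
  rintro ⟨⟨T, x⟩, hT, hx⟩ hp
  obtain ⟨ε, hε0, hε⟩ := (orbitGap_pos_iff A σ ha0 ha1 hT hx).1 hp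
  refine ⟨ε / 3, by positivity, ?_⟩
  rintro ⟨⟨T', x'⟩, hT', hx'⟩ hq
  rw [Metric.mem_ball, Subtype.dist_eq, Prod.dist_eq, max_lt_iff] at hq
  dsimp only at hε hq
  have hshadow := dist_iterate_regMap_lt A σ ha0 ha1 hq.1 hq.2 fun t e => by linarith [hε t e]
  refine (orbitGap_pos_iff A σ ha0 ha1 hT' hx').2 ⟨ε / 3, by positivity, fun t e => ?_⟩
  have hy := abs_sub_apply_lt_of_dist_lt (hshadow t) e.1.1
  have hTe := abs_sub_apply_lt_of_dist_lt hq.1 e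
  have htri := abs_sub_le ((regMap A σ T a)^[t] x e.1.1) ((regMap A σ T' a)^[t] x' e.1.1) (T e)
  have htri' := abs_sub_le ((regMap A σ T' a)^[t] x' e.1.1) (T' e) (T e)
  rw [abs_sub_comm] at hy
  linarith [hε t e]

lemma exists_hit_or_mem_affineAttractor (ha0 : 0 ≤ a) (ha1 : a ≤ 1) {T : {e // e ∈ A} → ℝ}
    (hT : T ∈ cubeA A) {x : V → ℝ} (hx : x ∈ cubeV V) (h : orbitGap A σ T a x = 0) :
    ∃ e : {e // e ∈ A},
      (∃ t, ∃ r ∈ affineReach a (interactionValues A e.1.1) t, T e = a ^ t * x e.1.1 + r) ∨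
        T e ∈ affineAttractor a (interactionValues A e.1.1) := by
  obtain ⟨e, he⟩ := exists_mem_closure_of_orbitGap_eq_zero A σ ha0 ha1 hT hx h
  have hrec : ∀ t, ∃ s ∈ interactionValues A e.1.1, (regMap A σ T a)^[t + 1] x e.1.1 =
      a * (regMap A σ T a)^[t] x e.1.1 + (1 - a) * s := fun t => by
    rw [Function.iterate_succ_apply']
    exact exists_regMap_apply_eq A σ a T _ _
  refine ⟨e, (exists_eq_or_mem_affineAttractor ha0 ha1 (interactionValues_subset_Icc A _)
    (hx _ trivial) hrec he).imp_left fun ⟨t, ht⟩ => ?_⟩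
  obtain ⟨r, hr, hyt⟩ :=
    exists_mem_affineReach_of_recurrence (y := fun t => (regMap A σ T a)^[t] x e.1.1) hrec t
  exact ⟨t, r, hr, ht.symm.trans hyt⟩

open MeasureTheory in
theorem volume_setOf_not_orbitGap_pos (ha0 : 0 ≤ a) (ha1 : a ≤ 1)
    (hsmall : ∀ u : V, a < 1 / (inDeg A u + 1)) :
    volume {p : ({e // e ∈ A} → ℝ) × (V → ℝ) |
      p.1 ∈ cubeA A ∧ p.2 ∈ cubeV V ∧ ¬ 0 < orbitGap A σ p.1 a p.2} = 0 := by
  refine measure_mono_null (t := ⋃ e : {e // e ∈ A},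
    ({p | p.1 e ∈ affineAttractor a (interactionValues A e.1.1)} ∪
      ⋃ t, ⋃ r ∈ affineReach a (interactionValues A e.1.1) t,
        {p | p.1 e = a ^ t * p.2 e.1.1 + r})) ?_ ?_
  · rintro ⟨T, x⟩ ⟨hT, hx, hgap⟩
    obtain ⟨e, ⟨t, r, hr, hTe⟩ | hTe⟩ := exists_hit_or_mem_affineAttractor A σ ha0 ha1 hT hx
      (nonpos_iff_eq_zero.1 (not_lt.1 hgap))
    · exact mem_iUnion.2 ⟨e, Or.inr (mem_iUnion.2 ⟨t, mem_iUnion₂.2 ⟨r, hr, hTe⟩⟩)⟩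
    · exact mem_iUnion.2 ⟨e, Or.inl hTe⟩
  rw [Measure.volume_eq_prod]
  refine measure_iUnion_null fun e => measure_union_null
    (prod_setOf_apply_mem_null _ (volume_affineAttractor ha0 ?_) e)
    (measure_iUnion_null fun t => (measure_biUnion_null_iff (Finset.countable_toSet _)).2
      fun r _ => prod_setOf_apply_eq_null _
        (f := fun y : V → ℝ => a ^ t * y e.1.1 + r) (by fun_prop) e)
  have hdeg := card_interactionValues_le A e.1.1
  have hlt := hsmall e.1.1
  rw [lt_div_iff₀ (by positivity)] at hlt
  calc ((interactionValues A e.1.1).card : ℝ) * a ≤ (inDeg A e.1.1 + 1) * a := by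
        gcongr; exact_mod_cast hdeg
    _ < 1 := by linarith

end Network

/-- If `a ∈ [0,1)` satisfies `a < 1/(Id(u)+1)` for every `u ∈ V`, then
for every sign vector `σ`, the set
`O_{G,σ,a} = {(T,x) ∈ [0,1]^A × [0,1]^V : inf_{t≥0} d_max(F_{G,σ,T,a}^t(x), Δ_T) > 0}` is
open and dense in `[0,1]^A × [0,1]^V` (with its subspace topology), and its complement in
`[0,1]^A × [0,1]^V` has Lebesgue measure zero. -/
theorem orbitGap_pos_open_dense_full_measure (V : Type*) [Fintype V] [DecidableEq V]
    (A : Finset (V × V)) (a : ℝ) (ha0 : 0 ≤ a) (ha1 : a < 1)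
    (hsmall : ∀ u : V, a < 1 / (inDeg A u + 1)) (σ : {e // e ∈ A} → Bool) :
    IsOpen {p : ↥(cubeA A ×ˢ cubeV V) | 0 < orbitGap A σ p.val.1 a p.val.2} ∧
    Dense {p : ↥(cubeA A ×ˢ cubeV V) | 0 < orbitGap A σ p.val.1 a p.val.2} ∧
    volume {p : ({e // e ∈ A} → ℝ) × (V → ℝ) |
        p.1 ∈ cubeA A ∧ p.2 ∈ cubeV V ∧ ¬ 0 < orbitGap A σ p.1 a p.2} = 0 := by
  have hnull := volume_setOf_not_orbitGap_pos A σ ha0 ha1.le hsmall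
  have hcube : cubeA A ×ˢ cubeV V ⊆ closure (interior (cubeA A ×ˢ cubeV V)) := by
    rw [interior_prod_eq, closure_prod_eq]
    exact prod_mono (unitCube_subset_closure_interior _) (unitCube_subset_closure_interior V)
  refine ⟨isOpen_setOf_orbitGap_pos A σ ha0 ha1.le,
    dense_setOf_of_measure_eq_zero volume hcube
      (P := fun p => 0 < orbitGap A σ p.1 a p.2) ?_, hnull⟩
  simpa only [mem_prod, and_assoc] using hnull
end
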